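/- arXiv:2004.03521 — 3 statements merged into one kernel-verified Lean document; each statement's English description precedes it below -/
import Mathlib

section
/- Let F^L, F^H ∈ ℝ and suppose (v_j − v_i)·F^L ≤ Ψ, where Ψ = (ψ(u_j) − ψ(u_i))·n is a fixed real number. Let P = (v_j − v_i)(F^H − F^L), Q = Ψ − (v_j − v_i)F^L ≥ 0, and α = Q/P if P > Q, α = 1 otherwise. Then the limited flux F = (1−α)F^L + α F^H satisfies (v_j − v_i)·F ≤ Ψ. -/
/-- Flux limiting with α_ij^ES1 preserves Tadmor's entropy stability condition. -/
theorem stmt_2 (FL FH vi vj Ψ : ℝ)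
    (hL : (vj - vi) * FL ≤ Ψ) :
    let P := (vj - vi) * (FH - FL)
    let Q := Ψ - (vj - vi) * FL
    let α := if P > Q then Q / P else 1
    (vj - vi) * ((1 - α) * FL + α * FH) ≤ Ψ := by
  intro P Q α
  have key : (vj - vi) * ((1 - α) * FL + α * FH) = (vj - vi) * FL + α * P := by
    simp only [P]; ring
  rw [key]
  by_cases h : P > Q
  · have hQ : 0 ≤ Q := by simp only [Q]; linarith
    have hP : 0 < P := lt_of_le_of_lt hQ h
    have : α = Q / P := if_pos h
    rw [this, div_mul_cancel₀ _ (ne_of_gt hP)]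
    simp only [Q]; linarith
  · have : α = 1 := if_neg h
    rw [this, one_mul]
    push_neg at h
    simp only [Q] at h; linarith
end

section
/- Let u_min ≤ ū ≤ u_max with λ > 0 and F^A ∈ ℝ. Define α^BP = min{1, λ·(u_max − ū)/F^A} if F^A > 0, α^BP = 1 if F^A = 0, and α^BP = min{1, λ·(u_min − ū)/F^A} if F^A < 0. Then for every α ∈ [0, α^BP], the flux-corrected state ū* = ū + α·F^A/λ satisfies u_min ≤ ū* ≤ u_max. -/
/-- Correctness of the monolithic convex limiting correction factor α_ij^BP. -/
theorem stmt_7 (umin umax ubar lam FA : ℝ)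
    (hlo : umin ≤ ubar) (hhi : ubar ≤ umax) (hlam : 0 < lam) :
    let αBP := if 0 < FA then min 1 (lam * (umax - ubar) / FA)
      else if FA = 0 then 1 else min 1 (lam * (umin - ubar) / FA)
    ∀ α : ℝ, 0 ≤ α → α ≤ αBP →
      umin ≤ ubar + α * FA / lam ∧ ubar + α * FA / lam ≤ umax := by
  intro αBP α hα0 hαBP
  rcases lt_trichotomy FA 0 with hF | hF | hF
  · simp only [αBP, if_neg (not_lt.mpr hF.le), if_neg hF.ne] at hαBP
    have hαF : α * FA ≤ 0 := mul_nonpos_of_nonneg_of_nonpos hα0 hF.le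
    constructor
    · -- need umin ≤ ubar + α*FA/lam
      have h2 : α ≤ lam * (umin - ubar) / FA := le_trans hαBP (min_le_right _ _)
      -- multiply by FA < 0 flips: α * FA ≥ lam * (umin - ubar)
      have h3 : lam * (umin - ubar) ≤ α * FA := by
        have := (le_div_iff_of_neg hF).mp h2
        linarith
      have : umin - ubar ≤ α * FA / lam := by
        rw [le_div_iff₀ hlam]; linarith
      linarith
    · have : α * FA / lam ≤ 0 := div_nonpos_of_nonpos_of_nonneg hαF hlam.le
      linarith
  · subst hF
    simp [hlo, hhi]
  · simp only [αBP, if_pos hF] at hαBP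
    have hαF : 0 ≤ α * FA := mul_nonneg hα0 hF.le
    constructor
    · have : 0 ≤ α * FA / lam := div_nonneg hαF hlam.le
      linarith
    · have h2 : α ≤ lam * (umax - ubar) / FA := le_trans hαBP (min_le_right _ _)
      have h3 : α * FA ≤ lam * (umax - ubar) := by
        have := (le_div_iff₀ hF).mp h2
        linarith
      have : α * FA / lam ≤ umax - ubar := by
        rw [div_le_iff₀ hlam]; linarith
      linarith
end

section
/- Let u_i, u_j ∈ ℝ, λ > 0, and f : ℝ → ℝ be Lipschitz with |f(a) − f(b)| ≤ λ|a − b| for all a, b between u_i and u_j. Then the bar state ū = (u_j + u_i)/2 − (f(u_j) − f(u_i))/(2λ) satisfies min{u_i, u_j} ≤ ū ≤ max{u_i, u_j}. -/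
/-- Invariant-domain property of the local Lax–Friedrichs bar state. -/
theorem stmt_8 (ui uj lam : ℝ) (f : ℝ → ℝ) (hlam : 0 < lam)
    (hf : ∀ a ∈ Set.Icc (min ui uj) (max ui uj), ∀ b ∈ Set.Icc (min ui uj) (max ui uj),
      |f a - f b| ≤ lam * |a - b|) :
    min ui uj ≤ (uj + ui) / 2 - (f uj - f ui) / (2 * lam) ∧
    (uj + ui) / 2 - (f uj - f ui) / (2 * lam) ≤ max ui uj := by
  have h1 : |f uj - f ui| ≤ lam * |uj - ui| :=
    hf uj ⟨min_le_right _ _, le_max_right _ _⟩ ui ⟨min_le_left _ _, le_max_left _ _⟩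
  have key : |(f uj - f ui) / (2 * lam)| ≤ |uj - ui| / 2 := by
    rw [abs_div, abs_of_pos (by positivity : (0:ℝ) < 2 * lam),
      div_le_div_iff₀ (by positivity) (by norm_num)]
    nlinarith [abs_nonneg (uj - ui)]
  obtain ⟨hk1, hk2⟩ := abs_le.mp key
  have hmm : max ui uj - min ui uj = |uj - ui| := by
    rcases le_total ui uj with h | h
    · rw [min_eq_left h, max_eq_right h, abs_of_nonneg (by linarith)]
    · rw [min_eq_right h, max_eq_left h, abs_of_nonpos (by linarith)]; ring
  have hsum : min ui uj + max ui uj = ui + uj := by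
    rcases le_total ui uj with h | h
    · rw [min_eq_left h, max_eq_right h]
    · rw [min_eq_right h, max_eq_left h]; ring
  constructor <;> linarith
end
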